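/- arXiv:2409.02351 — 4 statements merged into one kernel-verified Lean document; each statement's English description precedes it below -/
import Mathlib

section
/- The discrete Sobolev metric g^m is scale invariant: g^m_{λc}(λh, λk) = g^m_c(h,k) for all λ > 0. -/
open scoped BigOperators
open Finset

noncomputable section

variable {d n : ℕ}

/-- The `i`-th edge of a discrete closed curve. -/
def edge (c : ZMod n → EuclideanSpace ℝ (Fin d)) (i : ZMod n) : EuclideanSpace ℝ (Fin d) :=
  c (i + 1) - c i

/-- The averaged vertex weight `μ_i = (|e_i| + |e_{i-1}|)/2`. -/
def mu (c : ZMod n → EuclideanSpace ℝ (Fin d)) (i : ZMod n) : ℝ :=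
  (‖edge c i‖ + ‖edge c (i - 1)‖) / 2

/-- The total length `ℓ(c) = Σ_i |e_i|`. -/
def len [NeZero n] (c : ZMod n → EuclideanSpace ℝ (Fin d)) : ℝ :=
  ∑ i : ZMod n, ‖edge c i‖

/-- Discrete arc-length derivative `D_s^m h`. -/
def Ds (c : ZMod n → EuclideanSpace ℝ (Fin d)) :
    ℕ → (ZMod n → EuclideanSpace ℝ (Fin d)) → ZMod n → EuclideanSpace ℝ (Fin d)
  | 0, h => h
  | (j + 1), h => fun i =>
      if Even j then (‖edge c i‖)⁻¹ • (Ds c j h (i + 1) - Ds c j h i)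
      else (mu c i)⁻¹ • (Ds c j h i - Ds c j h (i - 1))

/-- The weight `μ_{i,m}`: `μ_i` for even `m`, `|e_i|` for odd `m`. -/
def muM (c : ZMod n → EuclideanSpace ℝ (Fin d)) (m : ℕ) (i : ZMod n) : ℝ :=
  if Even m then mu c i else ‖edge c i‖

/-- The homogeneous discrete Sobolev energy `ġ^m_c(h,k)`. -/
def gdot [NeZero n] (c : ZMod n → EuclideanSpace ℝ (Fin d)) (m : ℕ)
    (h k : ZMod n → EuclideanSpace ℝ (Fin d)) : ℝ :=
  ∑ i : ZMod n, (len c) ^ (2 * (m : ℤ) - 3) *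
    (inner ℝ (Ds c m h i) (Ds c m k i) : ℝ) * muM c m i

/-- The discrete Sobolev metric `g^m_c(h,k) = ġ^0_c(h,k) + ġ^m_c(h,k)`. -/
def gm [NeZero n] (c : ZMod n → EuclideanSpace ℝ (Fin d)) (m : ℕ)
    (h k : ZMod n → EuclideanSpace ℝ (Fin d)) : ℝ :=
  gdot c 0 h k + gdot c m h k

end

/-! Scaling the curve by `λ` multiplies every edge length by `|λ|` and each discrete derivative
`D_s` by `|λ|⁻¹`, while `D_s^m` is linear in the field. For `λ ≠ 0` the factors in each summand of
`ġ^m_{λc}(λh, λk)` multiply to `|λ|^(2m-3) · λ² · |λ|^(-2m) · |λ| = 1`. -/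

namespace DiscreteCurve

variable {d n : ℕ}

lemma edge_smul (c : ZMod n → EuclideanSpace ℝ (Fin d)) (lam : ℝ) (i : ZMod n) :
    edge (fun j => lam • c j) i = lam • edge c i := by
  simp only [edge, smul_sub]

lemma norm_edge_smul (c : ZMod n → EuclideanSpace ℝ (Fin d)) (lam : ℝ) (i : ZMod n) :
    ‖edge (fun j => lam • c j) i‖ = |lam| * ‖edge c i‖ := by
  rw [edge_smul, norm_smul, Real.norm_eq_abs]

lemma mu_smul (c : ZMod n → EuclideanSpace ℝ (Fin d)) (lam : ℝ) (i : ZMod n) :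
    mu (fun j => lam • c j) i = |lam| * mu c i := by
  simp only [mu, norm_edge_smul]
  ring

lemma muM_smul (c : ZMod n → EuclideanSpace ℝ (Fin d)) (lam : ℝ) (m : ℕ) (i : ZMod n) :
    muM (fun j => lam • c j) m i = |lam| * muM c m i := by
  unfold muM
  split_ifs
  · exact mu_smul c lam i
  · exact norm_edge_smul c lam i

lemma len_smul [NeZero n] (c : ZMod n → EuclideanSpace ℝ (Fin d)) (lam : ℝ) :
    len (fun j => lam • c j) = |lam| * len c := by
  simp only [len, norm_edge_smul, Finset.mul_sum]

lemma Ds_smul_field (c h : ZMod n → EuclideanSpace ℝ (Fin d)) (a : ℝ) (j : ℕ) (i : ZMod n) :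
    Ds c j (fun x => a • h x) i = a • Ds c j h i := by
  induction j generalizing i with
  | zero => rfl
  | succ j ih =>
    simp only [Ds, ih, ← smul_sub]
    split_ifs <;> rw [smul_comm]

lemma Ds_smul_curve (c h : ZMod n → EuclideanSpace ℝ (Fin d)) (lam : ℝ) (j : ℕ) (i : ZMod n) :
    Ds (fun x => lam • c x) j h i = (|lam| ^ j)⁻¹ • Ds c j h i := by
  induction j generalizing i with
  | zero => simp [Ds]
  | succ j ih =>
    simp only [Ds, ih, ← smul_sub, smul_smul, norm_edge_smul, mu_smul, pow_succ, mul_inv]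
    split_ifs <;> rw [smul_smul] <;> congr 1 <;> ring

lemma gdot_smul [NeZero n] (c h k : ZMod n → EuclideanSpace ℝ (Fin d)) {lam : ℝ} (hlam : lam ≠ 0)
    (m : ℕ) :
    gdot (fun i => lam • c i) m (fun i => lam • h i) (fun i => lam • k i) = gdot c m h k := by
  have habs : |lam| ≠ 0 := abs_ne_zero.mpr hlam
  have hscale : |lam| ^ (2 * (m : ℤ) - 3) * ((|lam| ^ m)⁻¹ * (|lam| ^ m)⁻¹ * (lam * lam)) * |lam|
      = 1 := by
    rw [← abs_mul_abs_self lam, zpow_sub₀ habs, zpow_mul, zpow_natCast]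
    field_simp
    ring
  unfold gdot
  refine Finset.sum_congr rfl fun i _ => ?_
  simp only [len_smul, Ds_smul_curve, Ds_smul_field, muM_smul, smul_smul, real_inner_smul_left,
    real_inner_smul_right, mul_zpow]
  linear_combination (len c ^ (2 * (m : ℤ) - 3) * inner ℝ (Ds c m h i) (Ds c m k i) * muM c m i)
    * hscale

end DiscreteCurve

theorem stmt_6_general (d n m : ℕ) [NeZero n]
    (c h k : ZMod n → EuclideanSpace ℝ (Fin d))
    (lam : ℝ) (hlam : 0 < lam) :
    gm (fun i => lam • c i) m (fun i => lam • h i) (fun i => lam • k i) = gm c m h k := by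
  simp only [gm, DiscreteCurve.gdot_smul c h k hlam.ne']

/-- Scale invariance of `g^m`. -/
theorem stmt_6 (d n m : ℕ) [NeZero n] (hn : 3 ≤ n)
    (c h k : ZMod n → EuclideanSpace ℝ (Fin d))
    (hc : ∀ i : ZMod n, c i ≠ c (i + 1)) (lam : ℝ) (hlam : 0 < lam) :
    gm (fun i => lam • c i) m (fun i => lam • h i) (fun i => lam • k i) = gm c m h k :=
  stmt_6_general d n m c h k lam hlam
end

section
/- For any real numbers a_1,...,a_n (cyclically indexed) with Σ_{i=1}^n a_i = 0, and any index k: |a_k| ≤ (1/2) Σ_{i=1}^n |a_{i+1} - a_i|. -/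
open scoped BigOperators
open Finset

/-
Walking around the cycle from `k` to `j` and back covers every edge once, so each of the two arcs
bounds `|a k - a j|` and hence `2 |a k - a j| ≤ Σ_i |a (i + 1) - a i|`. Averaging over `j` and using
`Σ_j a j = 0` turns this into the bound on `|a k|`.
-/

theorem ZMod.sum_range_natCast {M : Type*} [AddCommMonoid M] {n : ℕ} [NeZero n]
    (f : ZMod n → M) : ∑ t ∈ range n, f t = ∑ j, f j :=
  sum_nbij' (↑) ZMod.val (by simp) (by simp [ZMod.val_lt])
    (fun _ ht ↦ ZMod.val_natCast_of_lt (mem_range.1 ht)) (fun j _ ↦ ZMod.natCast_zmod_val j)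
    (fun _ _ ↦ rfl)

theorem ZMod.two_mul_dist_le_sum_dist {X : Type*} [PseudoMetricSpace X] {n : ℕ} [NeZero n]
    (a : ZMod n → X) (i j : ZMod n) :
    2 * dist (a i) (a j) ≤ ∑ k, dist (a k) (a (k + 1)) := by
  set f : ℕ → X := fun t ↦ a (i + t)
  set m := (j - i).val
  have hm : m ≤ n := (j - i).val_le
  have hfm : f m = a j := by simp [f, m]
  have hfn : f n = a i := by simp [f]
  have hcycle : ∑ t ∈ range n, dist (f t) (f (t + 1)) = ∑ k, dist (a k) (a (k + 1)) := by
    simp only [f, Nat.cast_succ, ← add_assoc]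
    rw [ZMod.sum_range_natCast fun t ↦ dist (a (i + t)) (a (i + t + 1))]
    exact Equiv.sum_comp (Equiv.addLeft i) fun k ↦ dist (a k) (a (k + 1))
  calc 2 * dist (a i) (a j) = dist (f 0) (f m) + dist (f m) (f n) := by
        rw [hfm, hfn, dist_comm (a j)]; simp [f, two_mul]
    _ ≤ ∑ t ∈ Ico 0 m, dist (f t) (f (t + 1)) + ∑ t ∈ Ico m n, dist (f t) (f (t + 1)) :=
        add_le_add (dist_le_Ico_sum_dist f m.zero_le) (dist_le_Ico_sum_dist f hm)
    _ = ∑ k, dist (a k) (a (k + 1)) := by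
        rw [sum_Ico_consecutive _ m.zero_le hm, ← range_eq_Ico, hcycle]

theorem norm_le_of_sum_eq_zero {ι E : Type*} [Fintype ι] [Nonempty ι] [SeminormedAddCommGroup E]
    [NormedSpace ℝ E] {a : ι → E} (ha : ∑ j, a j = 0) (k : ι) {C : ℝ}
    (hC : ∀ j, ‖a k - a j‖ ≤ C) : ‖a k‖ ≤ C := by
  have hcard : (0 : ℝ) < Fintype.card ι := by exact_mod_cast Fintype.card_pos
  refine le_of_mul_le_mul_left ?_ hcard
  calc (Fintype.card ι : ℝ) * ‖a k‖ = ‖∑ j, (a k - a j)‖ := by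
        rw [sum_sub_distrib, ha, sub_zero, sum_const, card_univ, ← Nat.cast_smul_eq_nsmul ℝ,
          norm_smul, Real.norm_natCast]
    _ ≤ ∑ j, ‖a k - a j‖ := norm_sum_le _ _
    _ ≤ ∑ _j : ι, C := sum_le_sum fun j _ ↦ hC j
    _ = Fintype.card ι * C := by rw [sum_const, card_univ, nsmul_eq_mul]

/-- A mean-zero cyclic real sequence is pointwise bounded by half the total
variation of its first differences. -/
theorem stmt_8 (n : ℕ) [NeZero n] (a : ZMod n → ℝ) (ha : ∑ i : ZMod n, a i = 0)
    (k : ZMod n) :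
    |a k| ≤ (1 / 2) * ∑ i : ZMod n, |a (i + 1) - a i| := by
  have hvar : ∑ i : ZMod n, |a (i + 1) - a i| = ∑ i, dist (a i) (a (i + 1)) := by
    simp only [Real.dist_eq, abs_sub_comm]
  rw [← Real.norm_eq_abs, hvar]
  refine norm_le_of_sum_eq_zero ha k fun j ↦ ?_
  have := ZMod.two_mul_dist_le_sum_dist a k j
  rw [← dist_eq_norm]
  linarith
end

section
/- Constant-coefficient version of the energy domination: for m ≥ 1, c ∈ R^{d×n}_*, h ∈ (ℝ^d)^n, the constant-coefficient discrete energies satisfy ġ̃^m_c(h,h) ≤ (ℓ(c)²/4) ġ̃^{m+1}_c(h,h). -/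
open scoped BigOperators
open Finset

/-- The constant-coefficient homogeneous discrete Sobolev energy `ġ̃^m_c(h,h)`. -/
noncomputable def gdotCC [NeZero n] (c : ZMod n → EuclideanSpace ℝ (Fin d)) (m : ℕ)
    (h : ZMod n → EuclideanSpace ℝ (Fin d)) : ℝ :=
  ∑ i : ZMod n, ‖Ds c m h i‖ ^ 2 * muM c m i

/-!
For `m ≥ 1`, `f = D_s^m h` is a difference quotient, so its weighted mean `Σ μ_{i,m} f_i` vanishes,
and `f` is a primitive of `g = D_s^{m+1} h`: `f_{i+1} - f_i = v_i g_i` with weights `v` of total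
mass `ℓ(c)`. A weighted mean minimizes `x ↦ Σ μ_{i,m} |f_i - x|²`, so the energy of `f` is at most
`ℓ(c) · max_i |f_i - f_0|²`. Going around the cycle both ways, `2 |f_i - f_0|` is at most the total
variation `Σ v_k |g_k|`, whose square is at most `ℓ(c) · Σ v_k |g_k|²` by Cauchy–Schwarz.
-/

namespace Fintype

variable {G M : Type*} [AddGroup G] [Fintype G] [AddCommMonoid M]

lemma sum_comp_add_right (f : G → M) (a : G) : ∑ x, f (x + a) = ∑ x, f x :=
  Equiv.sum_comp (Equiv.addRight a) f

lemma sum_comp_sub_right (f : G → M) (a : G) : ∑ x, f (x - a) = ∑ x, f x :=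
  Equiv.sum_comp (Equiv.subRight a) f

end Fintype

namespace ZMod

variable {n : ℕ} [NeZero n]

lemma sum_range_add_natCast {M : Type*} [AddCommMonoid M] (G : ZMod n → M) (j : ZMod n) :
    ∑ s ∈ range n, G (j + s) = ∑ k, G k := by
  refine sum_nbij' (fun s => j + s) (fun k => (k - j).val) ?_ ?_ ?_ ?_ ?_
  · simp
  · simp [ZMod.val_lt]
  · intro s hs
    simp [ZMod.val_cast_of_lt (mem_range.1 hs)]
  · simp
  · simp

lemma two_mul_dist_le_sum_dist_add_one {α : Type*} [PseudoMetricSpace α] (f : ZMod n → α)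
    (i j : ZMod n) : 2 * dist (f i) (f j) ≤ ∑ k, dist (f k) (f (k + 1)) := by
  set t := (i - j).val
  have ht : t ≤ n := (ZMod.val_lt _).le
  let F : ℕ → α := fun s => f (j + s)
  have hFt : F t = f i := by simp [F, t]
  have hFn : F n = f j := by simp [F]
  have h₁ : dist (f j) (f i) ≤ ∑ s ∈ range t, dist (F s) (F (s + 1)) := by
    simpa [F, hFt] using dist_le_range_sum_dist F t
  have h₂ : dist (f i) (f j) ≤ ∑ s ∈ Ico t n, dist (F s) (F (s + 1)) := by
    rw [← hFt, ← hFn]; exact dist_le_Ico_sum_dist F ht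
  calc 2 * dist (f i) (f j) = dist (f j) (f i) + dist (f i) (f j) := by rw [dist_comm]; ring
    _ ≤ ∑ s ∈ range n, dist (F s) (F (s + 1)) := by
      rw [← sum_range_add_sum_Ico _ ht]; gcongr
    _ = ∑ k, dist (f k) (f (k + 1)) := by
      simpa [F, add_assoc] using sum_range_add_natCast (fun k => dist (f k) (f (k + 1))) j

end ZMod

section
variable {ι E : Type*} [Fintype ι] [NormedAddCommGroup E] [InnerProductSpace ℝ E]

lemma sum_norm_sq_mul_le_sum_norm_sub_sq_mul {f : ι → E} {w : ι → ℝ} (hw : 0 ≤ ∑ i, w i)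
    (hmean : ∑ i, w i • f i = 0) (x : E) :
    ∑ i, ‖f i‖ ^ 2 * w i ≤ ∑ i, ‖f i - x‖ ^ 2 * w i := by
  have hexpand : ∑ i, ‖f i - x‖ ^ 2 * w i
      = ∑ i, ‖f i‖ ^ 2 * w i - 2 * inner ℝ (∑ i, w i • f i) x + (∑ i, w i) * ‖x‖ ^ 2 := by
    simp only [sum_inner, real_inner_smul_left, mul_sum, sum_mul, ← sum_sub_distrib,
      ← sum_add_distrib]
    exact sum_congr rfl fun i _ => by rw [norm_sub_sq_real]; ring
  rw [hexpand, hmean, inner_zero_left]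
  nlinarith [mul_nonneg hw (sq_nonneg ‖x‖)]

end

section

variable {E : Type*} [NormedAddCommGroup E] [InnerProductSpace ℝ E] {n : ℕ} [NeZero n]

theorem sum_norm_sq_mul_le_of_sum_smul_eq_zero {f g : ZMod n → E} {v w : ZMod n → ℝ}
    (hv : ∀ i, 0 ≤ v i) (hw : ∀ i, 0 ≤ w i) (hvw : ∑ i, w i = ∑ i, v i)
    (hmean : ∑ i, w i • f i = 0) (hstep : ∀ i, f (i + 1) - f i = v i • g i) :
    ∑ i, ‖f i‖ ^ 2 * w i ≤ (∑ i, v i) ^ 2 / 4 * ∑ i, ‖g i‖ ^ 2 * v i := by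
  set L := ∑ i, v i
  set D := ∑ i, ‖g i‖ ^ 2 * v i
  have hdist : ∀ k, dist (f k) (f (k + 1)) = v k * ‖g k‖ := fun k => by
    rw [dist_comm, dist_eq_norm, hstep, norm_smul, Real.norm_of_nonneg (hv k)]
  have hvar : (∑ k, dist (f k) (f (k + 1))) ^ 2 ≤ L * D := by
    simp only [hdist]
    exact sum_sq_le_sum_mul_sum_of_sq_le_mul _ (fun k _ => hv k)
      (fun k _ => mul_nonneg (sq_nonneg _) (hv k)) fun k _ => le_of_eq (by ring)
  have hosc : ∀ i, ‖f i - f 0‖ ^ 2 ≤ L * D / 4 := fun i => by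
    have htv := ZMod.two_mul_dist_le_sum_dist_add_one f i 0
    rw [dist_eq_norm] at htv
    nlinarith [norm_nonneg (f i - f 0)]
  calc ∑ i, ‖f i‖ ^ 2 * w i ≤ ∑ i, ‖f i - f 0‖ ^ 2 * w i :=
        sum_norm_sq_mul_le_sum_norm_sub_sq_mul (sum_nonneg fun i _ => hw i) hmean (f 0)
    _ ≤ ∑ i, L * D / 4 * w i := by gcongr with i; exacts [hw i, hosc i]
    _ = L ^ 2 / 4 * D := by rw [← mul_sum, hvw]; ring

end

section

variable {d n : ℕ} {c : ZMod n → EuclideanSpace ℝ (Fin d)}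

lemma Ds_succ_of_even (h : ZMod n → EuclideanSpace ℝ (Fin d)) {j : ℕ} (hj : Even j) (i : ZMod n) :
    Ds c (j + 1) h i = ‖edge c i‖⁻¹ • (Ds c j h (i + 1) - Ds c j h i) := by
  simp only [Ds, if_pos hj]

lemma Ds_succ_of_not_even (h : ZMod n → EuclideanSpace ℝ (Fin d)) {j : ℕ} (hj : ¬Even j)
    (i : ZMod n) : Ds c (j + 1) h i = (mu c i)⁻¹ • (Ds c j h i - Ds c j h (i - 1)) := by
  simp only [Ds, if_neg hj]

lemma sum_mu_eq_len [NeZero n] : ∑ i, mu c i = len c := by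
  simp only [mu, ← sum_div, sum_add_distrib,
    Fintype.sum_comp_sub_right (fun i => ‖edge c i‖), add_self_div_two, len]

variable (hc : ∀ i, c i ≠ c (i + 1))
include hc

lemma norm_edge_pos (i : ZMod n) : 0 < ‖edge c i‖ :=
  norm_pos_iff.2 (sub_ne_zero.2 (hc i).symm)

lemma mu_pos (i : ZMod n) : 0 < mu c i :=
  half_pos (add_pos (norm_edge_pos hc i) (norm_edge_pos hc (i - 1)))

lemma muM_pos (m : ℕ) (i : ZMod n) : 0 < muM c m i := by
  unfold muM
  split_ifs
  exacts [mu_pos hc i, norm_edge_pos hc i]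

variable [NeZero n]

lemma sum_muM_smul_Ds_eq_zero (h : ZMod n → EuclideanSpace ℝ (Fin d)) (j : ℕ) :
    ∑ i, muM c (j + 1) i • Ds c (j + 1) h i = 0 := by
  by_cases hj : Even j
  · have hodd : ¬Even (j + 1) := Nat.not_even_iff_odd.2 hj.add_one
    simp only [muM, if_neg hodd, Ds_succ_of_even h hj,
      smul_inv_smul₀ (norm_edge_pos hc _).ne', sum_sub_distrib,
      Fintype.sum_comp_add_right (Ds c j h), sub_self]
  · simp only [muM, if_pos (Nat.even_add_one.2 hj), Ds_succ_of_not_even h hj,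
      smul_inv_smul₀ (mu_pos hc _).ne', sum_sub_distrib,
      Fintype.sum_comp_sub_right (Ds c j h), sub_self]

lemma gdotCC_le_of_even (h : ZMod n → EuclideanSpace ℝ (Fin d)) {j : ℕ} (hj : Even j) :
    gdotCC c (j + 1) h ≤ len c ^ 2 / 4 * gdotCC c (j + 1 + 1) h := by
  have hodd : ¬Even (j + 1) := Nat.not_even_iff_odd.2 hj.add_one
  have hstep : ∀ i, Ds c (j + 1) h (i + 1) - Ds c (j + 1) h i
      = mu c (i + 1) • Ds c (j + 1 + 1) h (i + 1) := fun i => by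
    rw [Ds_succ_of_not_even h hodd, add_sub_cancel_right, smul_inv_smul₀ (mu_pos hc _).ne']
  have hlen : ∑ i, mu c (i + 1) = len c := by
    rw [Fintype.sum_comp_add_right (mu c), sum_mu_eq_len]
  have hvw : ∑ i, muM c (j + 1) i = ∑ i, mu c (i + 1) := by
    simp only [muM, if_neg hodd, hlen, len]
  have hE : gdotCC c (j + 1 + 1) h = ∑ i, ‖Ds c (j + 1 + 1) h (i + 1)‖ ^ 2 * mu c (i + 1) := by
    simp only [gdotCC, muM, if_pos (Nat.even_add_one.2 hodd),
      Fintype.sum_comp_add_right (fun i => ‖Ds c (j + 1 + 1) h i‖ ^ 2 * mu c i)]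
  rw [hE, ← hlen]
  exact sum_norm_sq_mul_le_of_sum_smul_eq_zero (fun i => (mu_pos hc _).le)
    (fun i => (muM_pos hc _ i).le) hvw (sum_muM_smul_Ds_eq_zero hc h j) hstep

lemma gdotCC_le_of_not_even (h : ZMod n → EuclideanSpace ℝ (Fin d)) {j : ℕ} (hj : ¬Even j) :
    gdotCC c (j + 1) h ≤ len c ^ 2 / 4 * gdotCC c (j + 1 + 1) h := by
  have heven : Even (j + 1) := Nat.even_add_one.2 hj
  have hstep : ∀ i, Ds c (j + 1) h (i + 1) - Ds c (j + 1) h i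
      = ‖edge c i‖ • Ds c (j + 1 + 1) h i := fun i => by
    rw [Ds_succ_of_even h heven, smul_inv_smul₀ (norm_edge_pos hc _).ne']
  have hvw : ∑ i, muM c (j + 1) i = ∑ i, ‖edge c i‖ := by
    simp only [muM, if_pos heven, sum_mu_eq_len, len]
  have hE : gdotCC c (j + 1 + 1) h = ∑ i, ‖Ds c (j + 1 + 1) h i‖ ^ 2 * ‖edge c i‖ := by
    simp only [gdotCC, muM, if_neg (Nat.not_even_iff_odd.2 heven.add_one)]
  rw [hE, len]
  exact sum_norm_sq_mul_le_of_sum_smul_eq_zero (fun i => (norm_edge_pos hc _).le)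
    (fun i => (muM_pos hc _ i).le) hvw (sum_muM_smul_Ds_eq_zero hc h j) hstep

end

theorem stmt_13_general (d n m : ℕ) [NeZero n] (hm : 1 ≤ m)
    (c : ZMod n → EuclideanSpace ℝ (Fin d))
    (hc : ∀ i : ZMod n, c i ≠ c (i + 1))
    (h : ZMod n → EuclideanSpace ℝ (Fin d)) :
    gdotCC c m h ≤ ((len c) ^ 2 / 4) * gdotCC c (m + 1) h := by
  obtain ⟨j, rfl⟩ := Nat.exists_eq_add_of_le' hm
  by_cases hj : Even j
  · exact gdotCC_le_of_even hc h hj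
  · exact gdotCC_le_of_not_even hc h hj

/-- Constant-coefficient version of the energy domination. -/
theorem stmt_13 (d n m : ℕ) [NeZero n] (hn : 3 ≤ n) (hm : 1 ≤ m)
    (c : ZMod n → EuclideanSpace ℝ (Fin d))
    (hc : ∀ i : ZMod n, c i ≠ c (i + 1))
    (h : ZMod n → EuclideanSpace ℝ (Fin d)) :
    gdotCC c m h ≤ ((len c) ^ 2 / 4) * gdotCC c (m + 1) h :=
  stmt_13_general d n m hm c hc h
end

section
/- Lipschitz estimate for the inverse length: for c ∈ R^{d×n}_* and h ∈ (ℝ^d)^n, the directional derivative of 1/ℓ(c) in direction h satisfies |d(1/ℓ(c))·h| ≤ ℓ(c)^{-3/2} √(Σ_{i=1}^n |h_{i+1}-h_i|²/|e_i|). -/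
open scoped BigOperators
open Finset

/-!
Differentiating `ℓ(c + t h) = Σ_i |e_i + t (h_{i+1} - h_i)|` at `t = 0` gives
`dℓ(c)·h = Σ_i ⟨e_i, h_{i+1} - h_i⟩ / |e_i|`, so `|d(1/ℓ)(c)·h| = |dℓ(c)·h| / ℓ(c)²` and
`|dℓ(c)·h| ≤ Σ_i |h_{i+1} - h_i|`. Writing `|h_{i+1} - h_i| = (|h_{i+1} - h_i| / √|e_i|) · √|e_i|`,
Cauchy–Schwarz bounds this sum by `√(Σ_i |h_{i+1} - h_i|² / |e_i|) · √ℓ(c)`.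
-/

theorem hasDerivAt_norm_add_smul {E : Type*} [NormedAddCommGroup E] [InnerProductSpace ℝ E]
    {a : E} (b : E) (ha : a ≠ 0) :
    HasDerivAt (fun t : ℝ => ‖a + t • b‖) (inner ℝ a b / ‖a‖) 0 := by
  have hline : HasDerivAt (fun t : ℝ => a + t • b) b 0 := by
    simpa using ((hasDerivAt_id (0 : ℝ)).smul_const b).const_add a
  have hsq : ‖a + (0 : ℝ) • b‖ ^ 2 ≠ 0 := by simpa using ha
  convert hline.norm_sq.sqrt hsq using 1
  · funext t
    exact (Real.sqrt_sq (norm_nonneg _)).symm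
  · simp only [zero_smul, add_zero, Real.sqrt_sq (norm_nonneg a)]
    ring

theorem Real.sum_le_sqrt_sum_sq_div_mul_sqrt_sum {ι : Type*} (s : Finset ι) (f : ι → ℝ)
    {g : ι → ℝ} (hg : ∀ i ∈ s, 0 < g i) :
    ∑ i ∈ s, f i ≤ √(∑ i ∈ s, f i ^ 2 / g i) * √(∑ i ∈ s, g i) := by
  rw [← Real.sqrt_mul (sum_nonneg fun i hi => div_nonneg (sq_nonneg _) (hg i hi).le)]
  exact Real.le_sqrt_of_sq_le <| sum_sq_le_sum_mul_sum_of_sq_le_mul s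
    (fun i hi => div_nonneg (sq_nonneg _) (hg i hi).le) (fun i hi => (hg i hi).le)
    (fun i hi => (div_mul_cancel₀ _ (hg i hi).ne').ge)

theorem abs_sum_inner_div_norm_le {ι E : Type*} [NormedAddCommGroup E] [InnerProductSpace ℝ E]
    (s : Finset ι) (u v : ι → E) :
    |∑ i ∈ s, inner ℝ (u i) (v i) / ‖u i‖| ≤ ∑ i ∈ s, ‖v i‖ := by
  refine (abs_sum_le_sum_abs _ _).trans (sum_le_sum fun i _ => ?_)
  rw [abs_div, abs_norm]
  exact div_le_of_le_mul₀ (norm_nonneg _) (norm_nonneg _)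
    ((abs_real_inner_le_norm _ _).trans_eq (mul_comm _ _))

section DiscreteCurve

variable {d n : ℕ}

theorem edge_add_smul (c h : ZMod n → EuclideanSpace ℝ (Fin d)) (t : ℝ) (i : ZMod n) :
    edge (fun j => c j + t • h j) i = edge c i + t • edge h i := by
  simp only [edge, smul_sub]
  abel

variable [NeZero n] {c : ZMod n → EuclideanSpace ℝ (Fin d)}

theorem len_pos (hc : ∀ i, edge c i ≠ 0) : 0 < len c :=
  sum_pos (fun i _ => norm_pos_iff.mpr (hc i)) univ_nonempty

theorem hasDerivAt_len_add_smul (h : ZMod n → EuclideanSpace ℝ (Fin d))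
    (hc : ∀ i, edge c i ≠ 0) :
    HasDerivAt (fun t : ℝ => len (fun i => c i + t • h i))
      (∑ i, inner ℝ (edge c i) (edge h i) / ‖edge c i‖) 0 := by
  simp only [len, edge_add_smul]
  exact HasDerivAt.fun_sum fun i _ => hasDerivAt_norm_add_smul (edge h i) (hc i)

theorem hasDerivAt_inv_len_add_smul (h : ZMod n → EuclideanSpace ℝ (Fin d))
    (hc : ∀ i, edge c i ≠ 0) :
    HasDerivAt (fun t : ℝ => (len (fun i => c i + t • h i))⁻¹)
      (-(∑ i, inner ℝ (edge c i) (edge h i) / ‖edge c i‖) / len c ^ 2) 0 := by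
  have h0 : len (fun i => c i + (0 : ℝ) • h i) = len c := by simp
  have := (hasDerivAt_len_add_smul h hc).fun_inv (h0 ▸ (len_pos hc).ne')
  rwa [h0] at this

end DiscreteCurve

theorem stmt_18_general (d n : ℕ) [NeZero n]
    (c h : ZMod n → EuclideanSpace ℝ (Fin d))
    (hc : ∀ i : ZMod n, c i ≠ c (i + 1)) :
    |deriv (fun t : ℝ => (len (fun i => c i + t • h i))⁻¹) 0| ≤
      (len c) ^ (-(3 : ℝ) / 2) *
        Real.sqrt (∑ i : ZMod n, ‖h (i + 1) - h i‖ ^ 2 / ‖edge c i‖) := by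
  have he : ∀ i, edge c i ≠ 0 := fun i => sub_ne_zero.mpr (hc i).symm
  have hl := len_pos he
  have hrpow : len c ^ (-(3 : ℝ) / 2) = √(len c) / len c ^ 2 := by
    rw [Real.sqrt_eq_rpow, ← Real.rpow_natCast, ← Real.rpow_sub hl]
    norm_num
  rw [(hasDerivAt_inv_len_add_smul h he).deriv, abs_div, abs_neg, abs_of_pos (pow_pos hl 2),
    hrpow, div_mul_eq_mul_div, mul_comm √(len c)]
  gcongr ?_ / _
  calc _ ≤ ∑ i, ‖edge h i‖ := abs_sum_inner_div_norm_le _ _ _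
    _ ≤ _ := Real.sum_le_sqrt_sum_sq_div_mul_sqrt_sum _ _ fun i _ => norm_pos_iff.mpr (he i)

/-- Lipschitz estimate for the inverse length: the directional derivative of
`1/ℓ(c)` in direction `h` is bounded by `ℓ(c)^{-3/2}` times the square root of
the first-order discrete Sobolev energy of `h`. -/
theorem stmt_18 (d n : ℕ) [NeZero n] (hn : 3 ≤ n)
    (c h : ZMod n → EuclideanSpace ℝ (Fin d))
    (hc : ∀ i : ZMod n, c i ≠ c (i + 1)) :
    |deriv (fun t : ℝ => (len (fun i => c i + t • h i))⁻¹) 0| ≤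
      (len c) ^ (-(3 : ℝ) / 2) *
        Real.sqrt (∑ i : ZMod n, ‖h (i + 1) - h i‖ ^ 2 / ‖edge c i‖) :=
  stmt_18_general d n c h hc
end
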